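/- For p = 103, there exist no x, y in ZMod 103 with x*y = -2 such that the matrix b = ![![1, x], ![y, -1]] together with a = ![![-1, 1], ![-1, 0]] satisfies the relations a^3 = 1, b^4 = 1, (a, b^2) = 1, and a*b*(a*b⁻¹)^3 = 1 generating the group ⟨2,3,4⟩. -/

import Mathlib

/-!
Since `b` has trace `0` and determinant `-1 - xy = 1`, Cayley–Hamilton gives `b ^ 2 = -1`, so
`b⁻¹ = -b` and the last relation says `(a * b) ^ 4 = -1`. For a `2 × 2` matrix `M` of determinant
`1`, Cayley–Hamilton applied to `M ^ 2` turns `M ^ 4 = -1` into `(trace M ^ 2 - 2) • M ^ 2 = 0`,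
hence `trace M ^ 2 = 2`. Here `trace (a * b) = y - x - 1`, and together with `xy = -2` this makes
`x + y` a root of `u ^ 4 + 10 u ^ 2 + 17`, which has no root modulo `103`.
-/

open Matrix

section CayleyHamilton

variable {R : Type*} [CommRing R]

theorem Matrix.sq_fin_two_eq (M : Matrix (Fin 2) (Fin 2) R) :
    M ^ 2 = M.trace • M - M.det • 1 := by
  ext i j
  fin_cases i <;> fin_cases j <;>
    simp [sq, mul_apply, Fin.sum_univ_two, trace_fin_two, det_fin_two] <;> ring

theorem Matrix.sq_eq_neg_one_of_trace_eq_zero {M : Matrix (Fin 2) (Fin 2) R}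
    (htr : M.trace = 0) (hdet : M.det = 1) : M ^ 2 = -1 := by
  simp [M.sq_fin_two_eq, htr, hdet]

theorem Matrix.inv_eq_neg_of_sq_eq_neg_one {M : Matrix (Fin 2) (Fin 2) R} (h : M ^ 2 = -1) :
    M⁻¹ = -M :=
  inv_eq_left_inv (by rw [neg_mul, ← sq, h, neg_neg])

theorem Matrix.trace_sq_eq_two_of_pow_four_eq_neg_one {M : Matrix (Fin 2) (Fin 2) R}
    (hdet : M.det = 1) (h4 : M ^ 4 = -1) : M.trace ^ 2 = 2 := by
  have hsq : (M ^ 2) ^ 2 = (M.trace ^ 2 - 2) • M ^ 2 - 1 := by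
    rw [(M ^ 2).sq_fin_two_eq, det_pow, hdet, one_pow, one_smul, M.sq_fin_two_eq]
    simp [trace_sub, trace_smul, hdet, smul_sub, sub_smul, sq]
  have hkill : (M.trace ^ 2 - 2) • M ^ 2 = 0 := by
    rw [← pow_mul] at hsq
    simpa [h4] using hsq.symm
  have hscalar : (M.trace ^ 2 - 2) • (1 : Matrix (Fin 2) (Fin 2) R) = 0 := by
    have := congrArg (· * M ^ 2) hkill
    simp only [smul_mul_assoc, ← pow_add, h4, zero_mul] at this
    simpa using this
  have h00 := congrFun (congrFun hscalar 0) 0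
  rw [smul_apply, one_apply_eq, smul_eq_mul, mul_one, zero_apply] at h00
  exact sub_eq_zero.mp h00

end CayleyHamilton

theorem ZMod.sq_sub_sub_one_ne_two_of_mul_eq_neg_two (x y : ZMod 103) (hxy : x * y = -2) :
    (y - x - 1) ^ 2 ≠ 2 := by
  intro ht
  have quartic : ∀ u : ZMod 103, u ^ 4 + 10 * u ^ 2 + 17 ≠ 0 := by decide
  apply quartic (x + y)
  -- with `t = y - x - 1` and `u = x + y`: `u ^ 2 + 5 - 2t = (t ^ 2 - 2) + 4 (xy + 2)`,
  -- and `u ^ 4 + 10 u ^ 2 + 17 = (u ^ 2 + 5 - 2t) (u ^ 2 + 5 + 2t) + 4 (t ^ 2 - 2)`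
  linear_combination ((x + y) ^ 2 + 5 + 2 * (y - x - 1) + 4) * ht +
    4 * ((x + y) ^ 2 + 5 + 2 * (y - x - 1)) * hxy

theorem no_coxeter_234_rep_mod_103 :
    ¬ ∃ x y : ZMod 103, x * y = -2 ∧
      ∀ a b : Matrix (Fin 2) (Fin 2) (ZMod 103),
        a = !![-1, 1; -1, 0] → b = !![1, x; y, -1] →
        a ^ 3 = 1 ∧ b ^ 4 = 1 ∧ a * b ^ 2 = b ^ 2 * a ∧ (a * b) * (a * b⁻¹) ^ 3 = 1 := by
  rintro ⟨x, y, hxy, h⟩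
  set a : Matrix (Fin 2) (Fin 2) (ZMod 103) := !![-1, 1; -1, 0]
  set b : Matrix (Fin 2) (Fin 2) (ZMod 103) := !![1, x; y, -1]
  obtain ⟨-, -, -, hrel⟩ := h a b rfl rfl
  have hdet_b : b.det = 1 := by
    simp only [b, det_fin_two_of]
    linear_combination -hxy
  have hb_inv : b⁻¹ = -b :=
    inv_eq_neg_of_sq_eq_neg_one <| sq_eq_neg_one_of_trace_eq_zero
      (by simp only [b, trace_fin_two_of, add_neg_cancel]) hdet_b
  have hdet : (a * b).det = 1 := by
    rw [det_mul, hdet_b, mul_one]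
    norm_num [a, det_fin_two_of]
  have htr : (a * b).trace = y - x - 1 := by
    simp only [a, b, mul_fin_two, trace_fin_two_of]
    ring
  have h4 : (a * b) ^ 4 = -1 := by
    rw [hb_inv, mul_neg, Odd.neg_pow (by decide), mul_neg, ← pow_succ'] at hrel
    exact neg_eq_iff_eq_neg.mp hrel
  exact ZMod.sq_sub_sub_one_ne_two_of_mul_eq_neg_two x y hxy
    (htr ▸ trace_sq_eq_two_of_pow_four_eq_neg_one hdet h4)
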